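/- Fix a quantile parameter q = h/k ∈ (0,1). Suppose the Frugal-1U quantile process with parameter q starts at the true q-quantile, i.e. m̃_0 = M with F(M) = q. Then for every t ≥ 1 and every ε ∈ (0,1), the probability that |F(m̃_t) − q| > 2·√(δ·ln(t/ε)) is at most ε. -/

import Mathlib

/-!
The Frugal-1U estimate is a birth–death chain on `ℤ`: from `x` it moves to `x + 1` with
probability `(1 - F x) q` and to `x - 1` with probability `F (x - 1) (1 - q)`. Its reversible
measure `ν`, normalised by `ν M = 1`, is invariant and dominates the initial point mass at `M`,
so it dominates the law of `m̃_t` at all times. Each odds ratio `(1 - F x) q / (F x (1 - q))` is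
at most `exp (-2 (F x - q))`, hence `ν (M ± j) ≤ exp (-2 ∑_{i<j} |F (M ± i) - q|)`. Since atoms
have mass at most `δ`, `|F - q|` grows by at most `δ` per step, so at a point `y` with
`|F y - q| > a = 2 √(δ log (t / ε))` this exponent is at most `a - a² / δ = a - 4 log (t / ε)`;
summing over the at most `2 t` points within distance `t` of `M` gives at most `ε`. For `t = 1`
the estimate moves with probability at most `2 q (1 - q) ≤ 1 / 2`, and the event is empty unless
`ε ≥ 1 / 2`.
-/

open MeasureTheory ProbabilityTheory Finset Real

lemma odds_ratio_le_exp {q x : ℝ} (hq0 : 0 < q) (hq1 : q < 1) (hqx : q ≤ x) (hx1 : x ≤ 1) :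
    (1 - x) * q / (x * (1 - q)) ≤ exp (-2 * (x - q)) := by
  -- with `c = x - q`: `1 - c ≤ exp (-c)` and `(1 - x) q ≤ (1 - c) ^ 2 x (1 - q)`
  have hc : (1 - (x - q)) ^ 2 ≤ exp (-2 * (x - q)) := by
    rw [show -2 * (x - q) = -(x - q) + -(x - q) by ring, exp_add, ← sq]
    exact pow_le_pow_left₀ (by linarith) (by linarith [add_one_le_exp (-(x - q))]) 2
  rw [div_le_iff₀ (by nlinarith)]
  refine le_trans ?_ (mul_le_mul_of_nonneg_right hc (by nlinarith))
  nlinarith [mul_nonneg (sub_nonneg.2 hqx) (sq_nonneg q),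
    mul_nonneg (mul_nonneg (mul_nonneg (sub_nonneg.2 hqx) (sub_nonneg.2 hq1.le))
      (by linarith : (0:ℝ) ≤ 1 - (x - q))) (sub_nonneg.2 hx1)]

lemma sum_range_sub_succ_mul (a δ : ℝ) (n : ℕ) :
    ∑ d ∈ range n, (a - (d + 1) * δ) = n * a - δ * (n * (n + 1) / 2) := by
  induction n with
  | zero => simp
  | succ n ih => rw [sum_range_succ, ih]; push_cast; ring

lemma le_add_nat_mul_of_succ_le {e : ℕ → ℝ} {δ : ℝ} (hstep : ∀ i, e (i + 1) ≤ e i + δ)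
    (i d : ℕ) : e (i + d) ≤ e i + d * δ := by
  induction d with
  | zero => simp
  | succ d ih => rw [← add_assoc]; push_cast; linarith [hstep (i + d)]

lemma sq_div_sub_le_sum_range {e : ℕ → ℝ} {δ a : ℝ} (hδ : 0 < δ) (he0 : e 0 = 0)
    (he : ∀ i, 0 ≤ e i) (hstep : ∀ i, e (i + 1) ≤ e i + δ) (ha : 0 ≤ a) {j : ℕ}
    (haj : a ≤ e j) : a ^ 2 / (2 * δ) - a / 2 ≤ ∑ i ∈ range j, e i := by
  set n := ⌊a / δ⌋₊
  have hn : n * δ ≤ a := (le_div_iff₀ hδ).1 (Nat.floor_le (by positivity))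
  have hn' : a < (n + 1) * δ := (div_lt_iff₀ hδ).1 (Nat.lt_floor_add_one _)
  have hnj : n ≤ j := by
    have := le_add_nat_mul_of_succ_le hstep 0 j
    rw [zero_add, he0, zero_add] at this
    exact_mod_cast le_of_mul_le_mul_right (hn.trans (haj.trans this)) hδ
  have hquad : a ^ 2 / (2 * δ) - a / 2 ≤ n * a - δ * (n * (n + 1) / 2) := by
    rw [div_sub' (by positivity), div_le_iff₀ (by positivity)]
    nlinarith [mul_nonneg (sub_nonneg.2 hn) (sub_nonneg.2 hn'.le)]
  calc a ^ 2 / (2 * δ) - a / 2 ≤ ∑ d ∈ range n, (a - (d + 1) * δ) := by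
        rw [sum_range_sub_succ_mul]; exact hquad
    _ ≤ ∑ d ∈ range n, e (j - 1 - d) := by
        refine sum_le_sum fun d hd => ?_
        have hdj : d + 1 ≤ j := (mem_range.1 hd).trans_le hnj
        have := le_add_nat_mul_of_succ_le hstep (j - 1 - d) (d + 1)
        rw [show j - 1 - d + (d + 1) = j by omega] at this
        push_cast at this
        linarith
    _ ≤ ∑ d ∈ range j, e (j - 1 - d) :=
        sum_le_sum_of_subset_of_nonneg (range_mono hnj) fun _ _ _ => he _
    _ = ∑ i ∈ range j, e i := sum_range_reflect e j

lemma sum_filter_lt_le_half {t : ℕ} {ε δ : ℝ} (ht : 2 ≤ t) (hε0 : 0 < ε) (hε1 : ε < 1)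
    (hδ0 : 0 < δ) (hδ : δ ≤ 1 / 2) {e w : ℕ → ℝ} (he0 : e 0 = 0) (he : ∀ i, 0 ≤ e i)
    (hstep : ∀ i, e (i + 1) ≤ e i + δ) (hw : ∀ j, w j ≤ exp (-2 * ∑ i ∈ range j, e i)) :
    ∑ j ∈ (Icc 1 t).filter (fun j => 2 * √(δ * log (t / ε)) < e j), w j ≤ ε / 2 := by
  set L := log (t / ε)
  set a := 2 * √(δ * L)
  have ht0 : (0 : ℝ) < t := by positivity
  have hL : log 2 ≤ L :=
    log_le_log two_pos <|
      (show (2 : ℝ) ≤ t by exact_mod_cast ht).trans (le_div_self ht0.le hε0 hε1.le)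
  have hL0 : 1 / 2 ≤ L := by linarith [log_two_gt_d9]
  have ha0 : 0 ≤ a := by positivity
  have ha2 : a ^ 2 = 4 * δ * L := by
    rw [mul_pow, sq_sqrt (by positivity)]; ring
  -- `a ^ 2 ≤ 2 L ≤ (2 L) ^ 2` and `2 L ≤ 3 L - log 2`
  have ha : a ≤ 3 * L - log 2 := by nlinarith
  have hexpL : t * exp (-L) = ε := by
    rw [exp_neg, exp_log (by positivity)]; field_simp
  calc ∑ j ∈ (Icc 1 t).filter (fun j => a < e j), w j
      ≤ ∑ _j ∈ (Icc 1 t).filter (fun j => a < e j), exp (a - 4 * L) := by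
        refine sum_le_sum fun j hj => (hw j).trans (exp_le_exp.2 ?_)
        have := sq_div_sub_le_sum_range hδ0 he0 he hstep ha0 (mem_filter.1 hj).2.le
        rw [ha2, show 4 * δ * L / (2 * δ) = 2 * L by field_simp; ring] at this
        linarith
    _ ≤ t * exp (a - 4 * L) := by
        rw [sum_const, nsmul_eq_mul]
        gcongr
        exact_mod_cast (card_filter_le _ _).trans (by simp)
    _ = ε * exp (a - 3 * L) := by
        rw [← hexpL, mul_assoc, ← exp_add]; ring_nf
    _ ≤ ε * exp (-log 2) := by gcongr; linarith
    _ = ε / 2 := by rw [exp_neg, exp_log two_pos]; ring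

/-- The reversible weights, normalised at `M`, of the birth–death chain on `ℤ` that steps from `x`
to `x + 1` with probability `p x` and to `x - 1` with probability `r x`. -/
noncomputable def balancedWeight (p r : ℤ → ℝ) (M x : ℤ) : ℝ :=
  if M ≤ x then ∏ i ∈ range (x - M).toNat, p (M + i) / r (M + i + 1)
  else ∏ i ∈ range (M - x).toNat, r (M - i) / p (M - i - 1)

namespace balancedWeight

variable {p r : ℤ → ℝ} {M : ℤ}

lemma add_nat (j : ℕ) :
    balancedWeight p r M (M + j) = ∏ i ∈ range j, p (M + i) / r (M + i + 1) := by
  simp [balancedWeight]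

lemma sub_nat (j : ℕ) :
    balancedWeight p r M (M - j) = ∏ i ∈ range j, r (M - i) / p (M - i - 1) := by
  rcases j.eq_zero_or_pos with rfl | hj
  · simp [balancedWeight]
  · simp [balancedWeight, hj.ne']

lemma nonneg (hp : ∀ x, 0 ≤ p x) (hr : ∀ x, 0 ≤ r x) (x : ℤ) : 0 ≤ balancedWeight p r M x := by
  unfold balancedWeight
  split_ifs <;> exact prod_nonneg fun i _ => div_nonneg (by apply_assumption) (by apply_assumption)

lemma succ_mul (hr : ∀ x, M < x → r x ≠ 0) (hp : ∀ x, x < M → p x ≠ 0) (x : ℤ) :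
    balancedWeight p r M (x + 1) * r (x + 1) = balancedWeight p r M x * p x := by
  rcases le_or_gt M x with hx | hx
  · obtain ⟨j, rfl⟩ := Int.le.dest hx
    have h := add_nat (p := p) (r := r) (M := M) (j + 1)
    rw [prod_range_succ, ← add_nat, Nat.cast_succ, ← add_assoc] at h
    rw [h, mul_assoc, div_mul_cancel₀ _ (hr _ (by omega))]
  · obtain ⟨j, hj⟩ : ∃ j : ℕ, x = M - (j + 1 : ℕ) := ⟨(M - x - 1).toNat, by omega⟩
    subst hj
    rw [show M - ((j + 1 : ℕ) : ℤ) + 1 = M - j by push_cast; ring, sub_nat, sub_nat,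
      prod_range_succ, mul_assoc, show M - ((j + 1 : ℕ) : ℤ) = M - j - 1 by push_cast; ring,
      div_mul_cancel₀ _ (hp _ (by omega))]

end balancedWeight

/-- Detailed balance makes `ν` invariant, so its domination of the law `w n` propagates in time. -/
lemma le_of_detailed_balance {w : ℕ → ℤ → ℝ} {ν p r c : ℤ → ℝ} (hp : ∀ x, 0 ≤ p x)
    (hr : ∀ x, 0 ≤ r x) (hc : ∀ x, 0 ≤ c x) (hprc : ∀ x, p x + r x + c x ≤ 1)
    (hν : ∀ x, 0 ≤ ν x) (hbal : ∀ x, ν (x + 1) * r (x + 1) = ν x * p x)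
    (h0 : ∀ y, w 0 y ≤ ν y)
    (hstep : ∀ n y, w (n + 1) y ≤ w n (y - 1) * p (y - 1) + w n (y + 1) * r (y + 1) + w n y * c y)
    (n : ℕ) (y : ℤ) : w n y ≤ ν y := by
  induction n generalizing y with
  | zero => exact h0 y
  | succ n ih =>
    have hin := hbal (y - 1)
    rw [sub_add_cancel] at hin
    calc w (n + 1) y ≤ ν (y - 1) * p (y - 1) + ν (y + 1) * r (y + 1) + ν y * c y := by
          refine (hstep n y).trans ?_
          gcongr <;> apply_assumption
      _ = ν y * (p y + r y + c y) := by rw [← hin, hbal]; ring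
      _ ≤ ν y := mul_le_of_le_one_right (hν y) (hprc y)

section CDF

variable {μ : Measure ℤ} {F : ℤ → ℝ}

lemma nonneg_of_eq_measure (hF : ∀ x, F x = (μ {y | y ≤ x}).toReal) (x : ℤ) : 0 ≤ F x :=
  hF x ▸ ENNReal.toReal_nonneg

lemma monotone_of_eq_measure [IsFiniteMeasure μ] (hF : ∀ x, F x = (μ {y | y ≤ x}).toReal) :
    Monotone F :=
  fun x y hxy => by rw [hF, hF]; exact measureReal_mono fun z hz => le_trans hz hxy

lemma le_one_of_eq_measure [IsProbabilityMeasure μ] (hF : ∀ x, F x = (μ {y | y ≤ x}).toReal)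
    (x : ℤ) : F x ≤ 1 :=
  hF x ▸ measureReal_le_one

lemma measureReal_Ioi_eq_one_sub [IsProbabilityMeasure μ]
    (hF : ∀ x, F x = (μ {y | y ≤ x}).toReal) (x : ℤ) : μ.real (Set.Ioi x) = 1 - F x := by
  rw [← Set.compl_Iic, probReal_compl_eq_one_sub measurableSet_Iic, hF]; rfl

lemma measureReal_Iio_eq_sub_one (hF : ∀ x, F x = (μ {y | y ≤ x}).toReal) (x : ℤ) :
    μ.real (Set.Iio x) = F (x - 1) := by
  rw [hF, show Set.Iio x = {y | y ≤ x - 1} by ext; simp]; rfl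

lemma succ_sub_le_of_eq_measure [IsFiniteMeasure μ] (hF : ∀ x, F x = (μ {y | y ≤ x}).toReal)
    {δ : ℝ} (hmass : ∀ x, (μ {x}).toReal ≤ δ) (x : ℤ) : F (x + 1) - F x ≤ δ := by
  have hsplit : {y : ℤ | y ≤ x + 1} = {y | y ≤ x} ∪ {x + 1} := by ext; simp; omega
  have hx := hmass (x + 1)
  rw [← measureReal_def] at hx
  rw [hF, hF, ← measureReal_def, ← measureReal_def, hsplit,
    measureReal_union (by simp) (measurableSet_singleton _)]
  linarith

end CDF

def upSet (q : ℝ) (x : ℤ) : Set (ℤ × ℝ) := Set.Ioi x ×ˢ Set.Ioi (1 - q)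

def downSet (q : ℝ) (x : ℤ) : Set (ℤ × ℝ) := Set.Iio x ×ˢ Set.Ioi q

noncomputable def frugalStep (q : ℝ) (x : ℤ) (z : ℤ × ℝ) : ℤ :=
  if x < z.1 ∧ 1 - q < z.2 then x + 1 else if z.1 < x ∧ q < z.2 then x - 1 else x

lemma measurableSet_upSet (q : ℝ) (x : ℤ) : MeasurableSet (upSet q x) :=
  measurableSet_Ioi.prod measurableSet_Ioi

lemma measurableSet_downSet (q : ℝ) (x : ℤ) : MeasurableSet (downSet q x) :=
  measurableSet_Iio.prod measurableSet_Ioi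

lemma disjoint_upSet_downSet (q : ℝ) (x : ℤ) : Disjoint (upSet q x) (downSet q x) :=
  Set.disjoint_left.2 fun _ hu hd => lt_asymm (Set.mem_Ioi.1 hu.1) (Set.mem_Iio.1 hd.1)

lemma measurable_frugalStep (q : ℝ) : Measurable fun p : ℤ × (ℤ × ℝ) => frugalStep q p.1 p.2 :=
  measurable_from_prod_countable_right fun x => by
    dsimp only [frugalStep]
    exact Measurable.ite (measurableSet_upSet q x) measurable_const <|
      Measurable.ite (measurableSet_downSet q x) measurable_const measurable_const

lemma abs_frugalStep_sub_le (q : ℝ) (x : ℤ) (z : ℤ × ℝ) : |frugalStep q x z - x| ≤ 1 := by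
  unfold frugalStep; split_ifs <;> simp

lemma mem_upSet_union_downSet_of_frugalStep_ne {q : ℝ} {x : ℤ} {z : ℤ × ℝ}
    (h : frugalStep q x z ≠ x) : z ∈ upSet q x ∪ downSet q x := by
  unfold frugalStep at h
  split_ifs at h with hu hd
  exacts [Or.inl hu, Or.inr hd, absurd rfl h]

lemma frugalStep_eq_cases {q : ℝ} {x y : ℤ} {z : ℤ × ℝ} (h : frugalStep q x z = y) :
    (x = y - 1 ∧ z ∈ upSet q (y - 1)) ∨ (x = y + 1 ∧ z ∈ downSet q (y + 1)) ∨
      (x = y ∧ z ∈ (upSet q y ∪ downSet q y)ᶜ) := by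
  unfold frugalStep at h
  split_ifs at h with hu hd
  · left; obtain rfl : x = y - 1 := by omega
    exact ⟨rfl, hu⟩
  · right; left; obtain rfl : x = y + 1 := by omega
    exact ⟨rfl, hd⟩
  · right; right; subst h
    exact ⟨rfl, by simp only [Set.mem_compl_iff, Set.mem_union]; exact not_or.2 ⟨hu, hd⟩⟩

noncomputable def frugalWeight (F : ℤ → ℝ) (q : ℝ) (M : ℤ) : ℤ → ℝ :=
  balancedWeight (fun x => (1 - F x) * q) (fun x => F (x - 1) * (1 - q)) M

namespace frugalWeight

variable {F : ℤ → ℝ} {q : ℝ} {M : ℤ}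

lemma nonneg (hq0 : 0 ≤ q) (hq1 : q ≤ 1) (hF0 : ∀ x, 0 ≤ F x) (hF1 : ∀ x, F x ≤ 1) (x : ℤ) :
    0 ≤ frugalWeight F q M x :=
  balancedWeight.nonneg (fun x => mul_nonneg (sub_nonneg.2 (hF1 x)) hq0)
    (fun x => mul_nonneg (hF0 (x - 1)) (sub_nonneg.2 hq1)) x

lemma self : frugalWeight F q M M = 1 := by
  simpa [frugalWeight] using balancedWeight.add_nat (p := fun x => (1 - F x) * q)
    (r := fun x => F (x - 1) * (1 - q)) (M := M) 0

lemma succ_mul (hq0 : 0 < q) (hq1 : q < 1) (hF : Monotone F) (hM : F M = q) (x : ℤ) :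
    frugalWeight F q M (x + 1) * (F x * (1 - q)) = frugalWeight F q M x * ((1 - F x) * q) := by
  have h := balancedWeight.succ_mul (p := fun x => (1 - F x) * q)
    (r := fun x => F (x - 1) * (1 - q)) (M := M)
    (fun x hx => mul_ne_zero (by linarith [hF (show M ≤ x - 1 by omega)]) (by linarith))
    (fun x hx => mul_ne_zero (by linarith [hF hx.le]) hq0.ne') x
  simpa only [frugalWeight, add_sub_cancel_right] using h

lemma add_nat_le (hq0 : 0 < q) (hq1 : q < 1) (hF : Monotone F) (hF1 : ∀ x, F x ≤ 1)
    (hM : F M = q) (j : ℕ) :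
    frugalWeight F q M (M + j) ≤ exp (-2 * ∑ i ∈ range j, |F (M + i) - q|) := by
  have hqF : ∀ i : ℕ, q ≤ F (M + i) := fun i => hM ▸ hF (by omega)
  rw [frugalWeight, balancedWeight.add_nat, mul_sum, exp_sum]
  simp only [add_sub_cancel_right]
  refine prod_le_prod (fun i _ => div_nonneg ?_ ?_) fun i _ => ?_
  · exact mul_nonneg (sub_nonneg.2 (hF1 _)) hq0.le
  · exact mul_nonneg (hq0.le.trans (hqF i)) (sub_nonneg.2 hq1.le)
  · rw [abs_of_nonneg (sub_nonneg.2 (hqF i))]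
    exact odds_ratio_le_exp hq0 hq1 (hqF i) (hF1 _)

lemma sub_nat_le (hq0 : 0 < q) (hq1 : q < 1) (hF : Monotone F) (hF0 : ∀ x, 0 ≤ F x)
    (hM : F M = q) (j : ℕ) :
    frugalWeight F q M (M - j) ≤ exp (-2 * ∑ i ∈ range j, |F (M - i) - q|) := by
  have hFq : ∀ x, x ≤ M → F x ≤ q := fun x hx => hM ▸ hF hx
  rw [frugalWeight, balancedWeight.sub_nat, mul_sum, exp_sum]
  refine prod_le_prod (fun i _ => div_nonneg ?_ ?_) fun i _ => ?_
  · exact mul_nonneg (hF0 _) (sub_nonneg.2 hq1.le)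
  · exact mul_nonneg (by linarith [hFq (M - i - 1) (by omega)]) hq0.le
  · have h := odds_ratio_le_exp (q := 1 - q) (x := 1 - F (M - i - 1)) (by linarith) (by linarith)
      (by linarith [hFq (M - i - 1) (by omega)]) (by linarith [hF0 (M - i - 1)])
    rw [sub_sub_cancel, sub_sub_cancel] at h
    rw [abs_of_nonpos (sub_nonpos.2 (hFq _ (by omega)))]
    refine h.trans (exp_le_exp.2 ?_)
    linarith [hF (show M - i - 1 ≤ M - i by omega)]

end frugalWeight

lemma measureReal_uniform_Ioi {c : ℝ} (hc0 : 0 ≤ c) (hc1 : c ≤ 1) :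
    (volume.restrict (Set.Icc (0 : ℝ) 1)).real (Set.Ioi c) = 1 - c := by
  have : Set.Ioi c ∩ Set.Icc 0 1 = Set.Ioc c 1 := by
    ext y; simp only [Set.mem_inter_iff, Set.mem_Ioi, Set.mem_Icc, Set.mem_Ioc]
    exact ⟨fun h => ⟨h.1, h.2.2⟩, fun h => ⟨h.1, by linarith [h.1], h.2⟩⟩
  rw [measureReal_restrict_apply measurableSet_Ioi, this, Real.volume_real_Ioc_of_le hc1]

lemma measureReal_upSet_prod_uniform {μ : Measure ℤ} [IsProbabilityMeasure μ] {F : ℤ → ℝ}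
    (hF : ∀ x, F x = (μ {y | y ≤ x}).toReal) {q : ℝ} (hq0 : 0 ≤ q) (hq1 : q ≤ 1) (x : ℤ) :
    (μ.prod (volume.restrict (Set.Icc (0 : ℝ) 1))).real (upSet q x) = (1 - F x) * q := by
  rw [upSet, measureReal_prod_prod, measureReal_Ioi_eq_one_sub hF,
    measureReal_uniform_Ioi (by linarith) (by linarith), sub_sub_cancel]

lemma measureReal_downSet_prod_uniform {μ : Measure ℤ} {F : ℤ → ℝ}
    (hF : ∀ x, F x = (μ {y | y ≤ x}).toReal) {q : ℝ} (hq0 : 0 ≤ q) (hq1 : q ≤ 1) (x : ℤ) :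
    (μ.prod (volume.restrict (Set.Icc (0 : ℝ) 1))).real (downSet q x) = F (x - 1) * (1 - q) := by
  rw [downSet, measureReal_prod_prod, measureReal_Iio_eq_sub_one hF,
    measureReal_uniform_Ioi hq0 hq1]

section FrugalChain

variable {Ω : Type*} {q : ℝ} {X : ℕ → Ω → ℤ × ℝ} {m : ℕ → Ω → ℤ} {M : ℤ}

lemma abs_sub_le_of_frugalStep (hm0 : ∀ ω, m 0 ω = M)
    (hm : ∀ t ω, m (t + 1) ω = frugalStep q (m t ω) (X (t + 1) ω)) (t : ℕ) (ω : Ω) :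
    |m t ω - M| ≤ t := by
  induction t with
  | zero => simp [hm0]
  | succ t ih =>
    rw [hm]
    have := abs_frugalStep_sub_le q (m t ω) (X (t + 1) ω)
    push_cast
    calc |frugalStep q (m t ω) (X (t + 1) ω) - M|
        ≤ |frugalStep q (m t ω) (X (t + 1) ω) - m t ω| + |m t ω - M| := abs_sub_le _ _ _
      _ ≤ t + 1 := by linarith

variable [MeasurableSpace Ω] {P : Measure Ω}

lemma measurable_natural_of_frugalStep (hX : ∀ t, Measurable (X t)) (hm0 : ∀ ω, m 0 ω = M)
    (hm : ∀ t ω, m (t + 1) ω = frugalStep q (m t ω) (X (t + 1) ω)) (t : ℕ) :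
    Measurable[Filtration.natural X (fun t => (hX t).stronglyMeasurable) t] (m t) := by
  induction t with
  | zero => simp only [funext hm0]; exact measurable_const
  | succ t ih =>
    have hXt := (Filtration.stronglyAdapted_natural
      (fun t => (hX t).stronglyMeasurable) (t + 1)).measurable
    rw [show m (t + 1) = _ from funext (hm t)]
    exact (measurable_frugalStep q).comp
      ((ih.mono (Filtration.mono _ t.le_succ) le_rfl).prodMk hXt)

lemma measureReal_frugalStep_succ_le {ρ : Measure (ℤ × ℝ)}
    (hX : ∀ t, Measurable (X t)) (hlaw : ∀ t, P.map (X t) = ρ) (hindep : iIndepFun X P)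
    (hm0 : ∀ ω, m 0 ω = M) (hm : ∀ t ω, m (t + 1) ω = frugalStep q (m t ω) (X (t + 1) ω))
    (n : ℕ) (y : ℤ) :
    P.real {ω | m (n + 1) ω = y} ≤
      P.real {ω | m n ω = y - 1} * ρ.real (upSet q (y - 1)) +
        P.real {ω | m n ω = y + 1} * ρ.real (downSet q (y + 1)) +
          P.real {ω | m n ω = y} * ρ.real (upSet q y ∪ downSet q y)ᶜ := by
  have := hindep.isProbabilityMeasure
  have hprod : ∀ x (B : Set (ℤ × ℝ)), MeasurableSet B →
      P.real ({ω | m n ω = x} ∩ X (n + 1) ⁻¹' B) = P.real {ω | m n ω = x} * ρ.real B := by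
    intro x B hB
    have h := (Indep_iff _ _ _).1
      (hindep.indep_comap_natural_of_lt (fun t => (hX t).stronglyMeasurable) n.lt_succ_self)
      _ _ ⟨B, hB, rfl⟩ (measurable_natural_of_frugalStep hX hm0 hm n (measurableSet_singleton x))
    rw [← hlaw (n + 1), map_measureReal_apply (hX _) hB, Set.inter_comm, mul_comm]
    exact (congrArg ENNReal.toReal h).trans ENNReal.toReal_mul
  have hsub : {ω | m (n + 1) ω = y} ⊆
      ({ω | m n ω = y - 1} ∩ X (n + 1) ⁻¹' upSet q (y - 1)) ∪
        ({ω | m n ω = y + 1} ∩ X (n + 1) ⁻¹' downSet q (y + 1)) ∪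
          ({ω | m n ω = y} ∩ X (n + 1) ⁻¹' (upSet q y ∪ downSet q y)ᶜ) := by
    intro ω (hω : m (n + 1) ω = y)
    rw [hm] at hω
    rcases frugalStep_eq_cases hω with h | h | h
    exacts [Or.inl (Or.inl h), Or.inl (Or.inr h), Or.inr h]
  rw [← hprod _ _ (measurableSet_upSet q _), ← hprod _ _ (measurableSet_downSet q _),
    ← hprod _ _ ((measurableSet_upSet q y).union (measurableSet_downSet q y)).compl]
  exact (measureReal_mono hsub).trans
    ((measureReal_union_le _ _).trans (add_le_add (measureReal_union_le _ _) le_rfl))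

lemma measureReal_frugal_le {ρ : Measure (ℤ × ℝ)}
    (hX : ∀ t, Measurable (X t)) (hlaw : ∀ t, P.map (X t) = ρ)
    (hindep : iIndepFun X P) (hm0 : ∀ ω, m 0 ω = M)
    (hm : ∀ t ω, m (t + 1) ω = frugalStep q (m t ω) (X (t + 1) ω)) {ν : ℤ → ℝ}
    (hν : ∀ x, 0 ≤ ν x) (hνM : 1 ≤ ν M)
    (hbal : ∀ x, ν (x + 1) * ρ.real (downSet q (x + 1)) = ν x * ρ.real (upSet q x))
    (n : ℕ) (y : ℤ) : P.real {ω | m n ω = y} ≤ ν y := by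
  have := hindep.isProbabilityMeasure
  have : IsProbabilityMeasure ρ := hlaw 0 ▸ Measure.isProbabilityMeasure_map (hX 0).aemeasurable
  refine le_of_detailed_balance (w := fun n y => P.real {ω | m n ω = y})
    (fun _ => measureReal_nonneg) (fun _ => measureReal_nonneg) (fun _ => measureReal_nonneg)
    (fun x => ?_) hν hbal (fun y => ?_) (measureReal_frugalStep_succ_le hX hlaw hindep hm0 hm) n y
  · rw [probReal_compl_eq_one_sub ((measurableSet_upSet q x).union (measurableSet_downSet q x)),
      measureReal_union (disjoint_upSet_downSet q x) (measurableSet_downSet q x)]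
    linarith
  · by_cases hy : y = M
    · subst hy; exact measureReal_le_one.trans hνM
    · simp [hm0, Ne.symm hy, hν]

lemma measureReal_frugal_le_frugalWeight {μ : Measure ℤ}
    [IsProbabilityMeasure μ] {F : ℤ → ℝ} (hF : ∀ x, F x = (μ {y | y ≤ x}).toReal)
    (hq0 : 0 < q) (hq1 : q < 1) (hM : F M = q) (hX : ∀ t, Measurable (X t))
    (hlaw : ∀ t, P.map (X t) = μ.prod (volume.restrict (Set.Icc (0 : ℝ) 1)))
    (hindep : iIndepFun X P) (hm0 : ∀ ω, m 0 ω = M)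
    (hm : ∀ t ω, m (t + 1) ω = frugalStep q (m t ω) (X (t + 1) ω)) (n : ℕ) (y : ℤ) :
    P.real {ω | m n ω = y} ≤ frugalWeight F q M y :=
  measureReal_frugal_le hX hlaw hindep hm0 hm
    (frugalWeight.nonneg hq0.le hq1.le (nonneg_of_eq_measure hF)
      (le_one_of_eq_measure hF)) frugalWeight.self.ge
    (fun x => by
      rw [measureReal_downSet_prod_uniform hF hq0.le hq1.le,
        measureReal_upSet_prod_uniform hF hq0.le hq1.le, add_sub_cancel_right]
      exact frugalWeight.succ_mul hq0 hq1 (monotone_of_eq_measure hF) hM x) n y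

end FrugalChain

lemma exists_mem_Icc_of_abs_sub_le {y M : ℤ} {t : ℕ} (hy : |y - M| ≤ t) (hne : y ≠ M) :
    ∃ j ∈ Icc 1 t, y = M + j ∨ y = M - j := by
  refine ⟨(y - M).natAbs, mem_Icc.2 ⟨by omega, ?_⟩, by omega⟩
  rw [← Int.ofNat_le, Int.natCast_natAbs]; exact hy

lemma measureReal_abs_sub_gt_le {Ω : Type*} [MeasurableSpace Ω] {P : Measure Ω}
    [IsFiniteMeasure P] {Y : Ω → ℤ} {F ν : ℤ → ℝ} {M : ℤ} {q δ ε : ℝ} {t : ℕ}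
    (ht : 2 ≤ t) (hε0 : 0 < ε) (hε1 : ε < 1) (hδ0 : 0 < δ) (hδ : δ ≤ 1 / 2) (hM : F M = q)
    (hF : ∀ x, |F (x + 1) - F x| ≤ δ) (hY : ∀ ω, |Y ω - M| ≤ t)
    (hYν : ∀ y, P.real {ω | Y ω = y} ≤ ν y)
    (hν_add : ∀ j : ℕ, ν (M + j) ≤ exp (-2 * ∑ i ∈ range j, |F (M + i) - q|))
    (hν_sub : ∀ j : ℕ, ν (M - j) ≤ exp (-2 * ∑ i ∈ range j, |F (M - i) - q|)) :
    P.real {ω | 2 * √(δ * log (t / ε)) < |F (Y ω) - q|} ≤ ε := by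
  set a := 2 * √(δ * log (t / ε))
  set Sadd := (Icc 1 t).filter fun j : ℕ => a < |F (M + j) - q|
  set Ssub := (Icc 1 t).filter fun j : ℕ => a < |F (M - j) - q|
  have hsub : {ω | a < |F (Y ω) - q|} ⊆
      (⋃ j ∈ Sadd, {ω | Y ω = M + j}) ∪ ⋃ j ∈ Ssub, {ω | Y ω = M - j} := by
    intro ω (hω : a < |F (Y ω) - q|)
    have hne : Y ω ≠ M := by
      rintro h; rw [h, hM, sub_self, abs_zero] at hω; exact hω.not_ge (by positivity)
    obtain ⟨j, hj, h | h⟩ := exists_mem_Icc_of_abs_sub_le (hY ω) hne <;> rw [h] at hω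
    · exact Or.inl (Set.mem_biUnion (mem_filter.2 ⟨hj, hω⟩) h)
    · exact Or.inr (Set.mem_biUnion (mem_filter.2 ⟨hj, hω⟩) h)
  have hstep_abs : ∀ x x', |F x - F x'| ≤ δ → |F x - q| ≤ |F x' - q| + δ := fun x x' h => by
    linarith [abs_sub_le (F x) (F x') q]
  have hsum_add : ∑ j ∈ Sadd, ν (M + j) ≤ ε / 2 :=
    sum_filter_lt_le_half ht hε0 hε1 hδ0 hδ (by simp [hM]) (fun _ => abs_nonneg _)
      (fun i => hstep_abs _ _ (by
        rw [Nat.cast_succ, ← add_assoc]; exact hF _)) hν_add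
  have hsum_sub : ∑ j ∈ Ssub, ν (M - j) ≤ ε / 2 :=
    sum_filter_lt_le_half ht hε0 hε1 hδ0 hδ (by simp [hM]) (fun _ => abs_nonneg _)
      (fun i => hstep_abs _ _ (by
        rw [abs_sub_comm, show M - i = M - (i + 1 : ℕ) + 1 by push_cast; ring]; exact hF _)) hν_sub
  calc P.real {ω | a < |F (Y ω) - q|}
      ≤ ∑ j ∈ Sadd, P.real {ω | Y ω = M + j} + ∑ j ∈ Ssub, P.real {ω | Y ω = M - j} :=
        (measureReal_mono hsub).trans <| (measureReal_union_le _ _).trans <|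
          add_le_add (measureReal_biUnion_finset_le _ _) (measureReal_biUnion_finset_le _ _)
    _ ≤ ∑ j ∈ Sadd, ν (M + j) + ∑ j ∈ Ssub, ν (M - j) := by
        gcongr <;> apply hYν
    _ ≤ ε := by linarith

lemma abs_sub_le_of_abs_sub_le_one {F : ℤ → ℝ} {δ : ℝ} (hF : ∀ x, |F (x + 1) - F x| ≤ δ)
    {x y : ℤ} (hxy : |y - x| ≤ 1) : |F y - F x| ≤ δ := by
  rcases abs_le.1 hxy with ⟨h1, h2⟩
  obtain rfl | rfl | rfl : y = x + 1 ∨ y = x ∨ x = y + 1 := by omega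
  · exact hF x
  · simpa using (abs_nonneg _).trans (hF 0)
  · rw [abs_sub_comm]; exact hF y

lemma measureReal_frugalStep_ne_le {Ω : Type*} [MeasurableSpace Ω] {P : Measure Ω}
    [IsFiniteMeasure P] {μ : Measure ℤ} [IsProbabilityMeasure μ] {F : ℤ → ℝ}
    (hF : ∀ x, F x = (μ {y | y ≤ x}).toReal) {q : ℝ} (hq0 : 0 ≤ q) (hq1 : q ≤ 1) {M : ℤ}
    (hM : F M = q) {Z : Ω → ℤ × ℝ} (hZ : Measurable Z)
    (hlaw : P.map Z = μ.prod (volume.restrict (Set.Icc (0 : ℝ) 1))) :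
    P.real {ω | frugalStep q M (Z ω) ≠ M} ≤ 1 / 2 := by
  have hFM : F (M - 1) ≤ q := hM ▸ monotone_of_eq_measure hF (by omega)
  calc P.real {ω | frugalStep q M (Z ω) ≠ M} ≤ P.real (Z ⁻¹' (upSet q M ∪ downSet q M)) :=
        measureReal_mono fun _ => mem_upSet_union_downSet_of_frugalStep_ne
    _ = (1 - q) * q + F (M - 1) * (1 - q) := by
        rw [← map_measureReal_apply hZ
            ((measurableSet_upSet q M).union (measurableSet_downSet q M)),
          hlaw, measureReal_union (disjoint_upSet_downSet q M) (measurableSet_downSet q M),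
          measureReal_upSet_prod_uniform hF hq0 hq1, measureReal_downSet_prod_uniform hF hq0 hq1,
          hM]
    _ ≤ 1 / 2 := by
        nlinarith [mul_le_mul_of_nonneg_right hFM (sub_nonneg.2 hq1), sq_nonneg (q - 1 / 2)]

lemma measureReal_abs_frugalStep_sub_gt_le {Ω : Type*} [MeasurableSpace Ω] {P : Measure Ω}
    [IsFiniteMeasure P] {μ : Measure ℤ} [IsProbabilityMeasure μ] {F : ℤ → ℝ}
    (hF : ∀ x, F x = (μ {y | y ≤ x}).toReal) {q δ ε : ℝ} (hq0 : 0 ≤ q) (hq1 : q ≤ 1)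
    (hδ0 : 0 < δ) (hδ : δ ≤ 1 / 2) (hFδ : ∀ x, |F (x + 1) - F x| ≤ δ) (hε0 : 0 < ε) {M : ℤ}
    (hM : F M = q) {Z : Ω → ℤ × ℝ} (hZ : Measurable Z)
    (hlaw : P.map Z = μ.prod (volume.restrict (Set.Icc (0 : ℝ) 1))) :
    P.real {ω | 2 * √(δ * log (1 / ε)) < |F (frugalStep q M (Z ω)) - q|} ≤ ε := by
  set a := 2 * √(δ * log (1 / ε))
  by_cases hε : 1 / 2 ≤ ε
  · refine (measureReal_mono fun ω (hω : a < _) => ?_).trans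
      ((measureReal_frugalStep_ne_le hF hq0 hq1 hM hZ hlaw).trans hε)
    rintro (h : frugalStep q M (Z ω) = M)
    rw [h, hM, sub_self, abs_zero] at hω
    exact hω.not_ge (by positivity)
  · have hL : log 2 ≤ log (1 / ε) := log_le_log two_pos (by rw [le_div_iff₀ hε0]; linarith)
    have hδa : δ / 2 ≤ √(δ * log (1 / ε)) := le_sqrt_of_sq_le (by nlinarith [log_two_gt_d9])
    have hempty : {ω | a < |F (frugalStep q M (Z ω)) - q|} = ∅ := by
      refine Set.eq_empty_of_forall_notMem fun ω (hω : a < _) => ?_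
      have := abs_sub_le_of_abs_sub_le_one hFδ (abs_frugalStep_sub_le q M (Z ω))
      rw [hM] at this
      linarith [show a = 2 * √(δ * log (1 / ε)) from rfl]
    rw [hempty, measureReal_empty]
    exact hε0.le

theorem frugal1U_quantile_stability_general
    {Ω : Type*} [MeasureSpace Ω] [IsProbabilityMeasure (ℙ : Measure Ω)]
    (μ : Measure ℤ) [IsProbabilityMeasure μ]
    (q : ℝ)
    (δ : ℝ) (hδ0 : 0 < δ) (hδq : δ < min q (1 - q))
    (hmass : ∀ x : ℤ, (μ {x}).toReal ≤ δ)
    (F : ℤ → ℝ) (hF : ∀ x : ℤ, F x = (μ {y : ℤ | y ≤ x}).toReal)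
    (s : ℕ → Ω → ℤ) (u : ℕ → Ω → ℝ)
    (hs_meas : ∀ t, Measurable (s t)) (hu_meas : ∀ t, Measurable (u t))
    (hlaw : ∀ t : ℕ, Measure.map (fun ω => (s t ω, u t ω)) ℙ
      = μ.prod (volume.restrict (Set.Icc (0:ℝ) 1)))
    (hindep : iIndepFun
      (fun t ω => (s t ω, u t ω)) ℙ)
    (m : ℕ → Ω → ℤ)
    (M : ℤ) (hquantile : F M = q)
    (hm0 : ∀ ω, m 0 ω = M)
    (hrec : ∀ t ω, m (t+1) ω =
      if m t ω < s (t+1) ω ∧ 1 - q < u (t+1) ω then m t ω + 1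
      else if s (t+1) ω < m t ω ∧ q < u (t+1) ω then m t ω - 1
      else m t ω)
    (t : ℕ) (ht : 1 ≤ t) (ε : ℝ) (hε0 : 0 < ε) (hε1 : ε < 1) :
    ℙ {ω | 2 * Real.sqrt (δ * Real.log (t / ε)) < |F (m t ω) - q|}
      ≤ ENNReal.ofReal ε := by
  have hq0 : 0 < q := hδ0.trans (hδq.trans_le (min_le_left _ _))
  have hq1 : q < 1 := by linarith [hδq.trans_le (min_le_right q (1 - q))]
  have hδ : δ ≤ 1 / 2 := by linarith [min_le_left q (1 - q), min_le_right q (1 - q)]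
  have hFmono := monotone_of_eq_measure hF
  have hFδ : ∀ x, |F (x + 1) - F x| ≤ δ := fun x => by
    rw [abs_of_nonneg (sub_nonneg.2 (hFmono (by omega)))]
    exact succ_sub_le_of_eq_measure hF hmass x
  set X : ℕ → Ω → ℤ × ℝ := fun t ω => (s t ω, u t ω)
  have hX : ∀ t, Measurable (X t) := fun t => (hs_meas t).prodMk (hu_meas t)
  have hm : ∀ t ω, m (t + 1) ω = frugalStep q (m t ω) (X (t + 1) ω) := hrec
  rw [ENNReal.le_ofReal_iff_toReal_le (measure_ne_top _ _) hε0.le]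
  obtain rfl | ht2 := ht.eq_or_lt
  · have hm1 : ∀ ω, m 1 ω = frugalStep q M (X 1 ω) := fun ω => by rw [hm, hm0]
    simp only [hm1, Nat.cast_one]
    exact measureReal_abs_frugalStep_sub_gt_le hF hq0.le hq1.le hδ0 hδ hFδ hε0 hquantile (hX 1)
      (hlaw 1)
  · exact measureReal_abs_sub_gt_le ht2 hε0 hε1 hδ0 hδ hquantile hFδ
      (abs_sub_le_of_frugalStep hm0 hm t)
      (measureReal_frugal_le_frugalWeight hF hq0 hq1 hquantile hX hlaw hindep hm0 hm t)
      (frugalWeight.add_nat_le hq0 hq1 hFmono (le_one_of_eq_measure hF) hquantile)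
      (frugalWeight.sub_nat_le hq0 hq1 hFmono (nonneg_of_eq_measure hF) hquantile)

/-- If the Frugal-1U process estimating the `q = h/k` quantile
starts at the true `q`-quantile (`m̃₀ = M` with `F(M) = q`), then for every
`t ≥ 1` and `ε ∈ (0,1)`, `Pr[|F(m̃_t) − q| > 2√(δ·ln(t/ε))] ≤ ε`. -/
theorem frugal1U_quantile_stability
    {Ω : Type*} [MeasureSpace Ω] [IsProbabilityMeasure (ℙ : Measure Ω)]
    (μ : Measure ℤ) [IsProbabilityMeasure μ]
    (h k : ℕ) (hh : 0 < h) (hhk : h < k)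
    (q : ℝ) (hq : q = (h : ℝ) / k)
    (δ : ℝ) (hδ0 : 0 < δ) (hδq : δ < min q (1 - q))
    (hmass : ∀ x : ℤ, (μ {x}).toReal ≤ δ)
    (F : ℤ → ℝ) (hF : ∀ x : ℤ, F x = (μ {y : ℤ | y ≤ x}).toReal)
    (s : ℕ → Ω → ℤ) (u : ℕ → Ω → ℝ)
    (hs_meas : ∀ t, Measurable (s t)) (hu_meas : ∀ t, Measurable (u t))
    (hlaw : ∀ t : ℕ, Measure.map (fun ω => (s t ω, u t ω)) ℙ
      = μ.prod (volume.restrict (Set.Icc (0:ℝ) 1)))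
    (hindep : iIndepFun
      (fun t ω => (s t ω, u t ω)) ℙ)
    (m : ℕ → Ω → ℤ)
    (M : ℤ) (hquantile : F M = q)
    (hm0 : ∀ ω, m 0 ω = M)
    (hrec : ∀ t ω, m (t+1) ω =
      if m t ω < s (t+1) ω ∧ 1 - q < u (t+1) ω then m t ω + 1
      else if s (t+1) ω < m t ω ∧ q < u (t+1) ω then m t ω - 1
      else m t ω)
    (t : ℕ) (ht : 1 ≤ t) (ε : ℝ) (hε0 : 0 < ε) (hε1 : ε < 1) :
    ℙ {ω | 2 * Real.sqrt (δ * Real.log (t / ε)) < |F (m t ω) - q|}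
      ≤ ENNReal.ofReal ε :=
  frugal1U_quantile_stability_general μ q δ hδ0 hδq hmass F hF s u hs_meas hu_meas hlaw hindep m M
    hquantile hm0 hrec t ht ε hε0 hε1
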